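/- Let M ≥ 0, let f : [0,∞) → H be continuous with ‖f(s)‖ ≤ M for all s, let a ∈ (0,1), let x ∈ D_a, and define X(t) = S(t)x + ∫₀^t S(t−s) f(s) ds for t ≥ 0 (Bochner integral in H). Then there exists a constant C (depending only on a, λ₀ and M) such that for all t ≥ 0, X(t) ∈ D_a and |X(t)|_a ≤ C (1 + |x|_a). -/

import Mathlib

/-!
Coordinatewise, `X(t)ₖ = e^{-λₖ t} xₖ + ∫₀ᵗ e^{-λₖ(t-s)} fₖ(s) ds`, and the first term has
`|·|_a`-norm at most `|x|_a`. For the second, splitting `e^{-λu} = e^{-λu/2} e^{-λu/2}` and using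
`y^a ≤ e^y` gives the smoothing estimate `λ^a e^{-λu} ≤ 2^a u^{-a} e^{-λ₀u/2}` for `λ ≥ λ₀`, so the
operator norm of `(-A)^a S(u)` is bounded by a function of `u` whose integral over `(0, ∞)` is
`2^a (2/λ₀)^{1-a} Γ(1-a)`, finite because `a < 1`. Moving the norm inside the Bochner integral
then bounds `|∫₀ᵗ S(t-s) f(s) ds|_a` by `M` times that constant, uniformly in `t`. As `(-A)^a` is
unbounded, these estimates are made for its truncations to finitely many coordinates, which are
continuous linear maps and hence commute with the integral.
-/

open Real MeasureTheory Set Filter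
open scoped ENNReal Topology

noncomputable section

/-- `Hsp` is the real Hilbert space `ℓ²` of square-summable real sequences. -/
abbrev Hsp : Type := lp (fun _ : ℕ => ℝ) 2

/-- The norm `|x|_σ = (∑ₖ λₖ^{2σ} xₖ²)^{1/2}` of the domain `D((-A)^σ)`. -/
noncomputable def nrmD (lam : ℕ → ℝ) (σ : ℝ) (x : Hsp) : ℝ :=
  Real.sqrt (∑' k, lam k ^ (2 * σ) * (x k) ^ 2)

/-- Membership in the domain `D((-A)^σ)`: `∑ₖ λₖ^{2σ} xₖ² < ∞`. -/
def memD (lam : ℕ → ℝ) (σ : ℝ) (x : Hsp) : Prop :=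
  Summable (fun k => lam k ^ (2 * σ) * (x k) ^ 2)

theorem rpow_le_exp {b x : ℝ} (hb0 : 0 ≤ b) (hb1 : b ≤ 1) (hx : 0 ≤ x) : x ^ b ≤ exp x := by
  rcases le_total x 1 with hx1 | hx1
  · exact (rpow_le_one hx hx1 hb0).trans (one_le_exp hx)
  · calc x ^ b ≤ x ^ (1 : ℝ) := rpow_le_rpow_of_exponent_le hx1 hb1
      _ = x := rpow_one x
      _ ≤ exp x := by linarith [add_one_le_exp x]

theorem rpow_mul_exp_neg_mul_le {a l l₀ u : ℝ} (ha0 : 0 ≤ a) (ha1 : a ≤ 1) (hl₀ : 0 ≤ l₀)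
    (hl : l₀ ≤ l) (hu : 0 < u) :
    l ^ a * exp (-(l * u)) ≤ 2 ^ a * u ^ (-a) * exp (-(l₀ / 2 * u)) := by
  have hl0 : 0 ≤ l := hl₀.trans hl
  have hsplit : l ^ a = 2 ^ a * u ^ (-a) * (l * u / 2) ^ a := by
    rw [div_rpow (by positivity) zero_le_two, mul_rpow hl0 hu.le, rpow_neg hu.le]
    field_simp
  calc l ^ a * exp (-(l * u))
      ≤ 2 ^ a * u ^ (-a) * exp (l * u / 2) * exp (-(l * u)) := by
        rw [hsplit]
        gcongr
        exact rpow_le_exp ha0 ha1 (by positivity)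
    _ = 2 ^ a * u ^ (-a) * exp (-(l * u / 2)) := by
        rw [mul_assoc, ← exp_add]; ring_nf
    _ ≤ 2 ^ a * u ^ (-a) * exp (-(l₀ / 2 * u)) := by
        gcongr
        nlinarith

theorem integrableOn_rpow_neg_mul_exp_neg_mul {a r : ℝ} (ha : a < 1) (hr : 0 < r) :
    IntegrableOn (fun u : ℝ => u ^ (-a) * exp (-(r * u))) (Ioi 0) := by
  simpa [rpow_one] using
    integrableOn_rpow_mul_exp_neg_mul_rpow (s := -a) (p := 1) (by linarith) one_pos hr

theorem intervalIntegral_rpow_neg_mul_exp_neg_mul_le {a r t : ℝ} (ha : a < 1) (hr : 0 < r)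
    (ht : 0 ≤ t) :
    ∫ u in (0 : ℝ)..t, u ^ (-a) * exp (-(r * u)) ≤ (1 / r) ^ (1 - a) * Gamma (1 - a) := by
  rw [intervalIntegral.integral_of_le ht, ← integral_rpow_mul_exp_neg_mul_Ioi (by linarith) hr,
    sub_sub_cancel_left]
  refine setIntegral_mono_set (integrableOn_rpow_neg_mul_exp_neg_mul ha hr) ?_
    Ioc_subset_Ioi_self.eventuallyLE
  filter_upwards [ae_restrict_mem measurableSet_Ioi] with u hu
  exact mul_nonneg (rpow_nonneg (le_of_lt hu) _) (exp_pos _).le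

theorem lp.sum_sq_le_norm_sq {α : Type*} (y : lp (fun _ : α => ℝ) 2) (F : Finset α) :
    ∑ k ∈ F, y k ^ 2 ≤ ‖y‖ ^ 2 := by
  have h := lp.sum_rpow_le_norm_rpow (p := 2) (by norm_num) y F
  simp only [ENNReal.toReal_ofNat, rpow_two, Real.norm_eq_abs, sq_abs] at h
  exact h

/-- `x ↦ (λₖ^σ xₖ)_{k ∈ F}`, a finite-rank truncation of `(-A)^σ`. -/
def truncPow (lam : ℕ → ℝ) (σ : ℝ) (F : Finset ℕ) : Hsp →L[ℝ] EuclideanSpace ℝ F :=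
  (EuclideanSpace.equiv F ℝ).symm.toContinuousLinearMap ∘L
    ContinuousLinearMap.pi fun k : F => lam k ^ σ • lp.evalCLM ℝ (fun _ : ℕ => ℝ) 2 k

section truncPow

variable {lam : ℕ → ℝ} {σ : ℝ} {F : Finset ℕ}

theorem norm_truncPow_sq (x : Hsp) :
    ‖truncPow lam σ F x‖ ^ 2 = ∑ k ∈ F, (lam k ^ σ * x k) ^ 2 := by
  rw [EuclideanSpace.real_norm_sq_eq, ← Finset.sum_coe_sort F]
  rfl

theorem norm_truncPow_le_norm_truncPow {y z : Hsp} (h : ∀ k ∈ F, |y k| ≤ |z k|) :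
    ‖truncPow lam σ F y‖ ≤ ‖truncPow lam σ F z‖ := by
  refine le_of_pow_le_pow_left₀ two_ne_zero (norm_nonneg _) ?_
  rw [norm_truncPow_sq, norm_truncPow_sq]
  refine Finset.sum_le_sum fun k hk => sq_le_sq.mpr ?_
  rw [abs_mul, abs_mul]
  exact mul_le_mul_of_nonneg_left (h k hk) (abs_nonneg _)

theorem norm_truncPow_le_mul_norm {y z : Hsp} {c : ℝ} (hc : 0 ≤ c)
    (h : ∀ k ∈ F, |lam k ^ σ * y k| ≤ c * |z k|) : ‖truncPow lam σ F y‖ ≤ c * ‖z‖ := by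
  refine le_of_pow_le_pow_left₀ two_ne_zero (by positivity) ?_
  calc ‖truncPow lam σ F y‖ ^ 2 = ∑ k ∈ F, (lam k ^ σ * y k) ^ 2 := norm_truncPow_sq y
    _ ≤ ∑ k ∈ F, c ^ 2 * z k ^ 2 := by
        refine Finset.sum_le_sum fun k hk => ?_
        rw [← mul_pow]
        exact sq_le_sq.mpr (by rw [abs_mul c, abs_of_nonneg hc]; exact h k hk)
    _ ≤ (c * ‖z‖) ^ 2 := by
        rw [← Finset.mul_sum, mul_pow]
        exact mul_le_mul_of_nonneg_left (lp.sum_sq_le_norm_sq z F) (sq_nonneg c)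

theorem rpow_two_mul_mul_sq {l : ℝ} (hl : 0 ≤ l) (y : ℝ) :
    l ^ (2 * σ) * y ^ 2 = (l ^ σ * y) ^ 2 := by
  rw [mul_comm 2 σ, rpow_mul hl, rpow_two, mul_pow]

variable (hlam : ∀ k, 0 ≤ lam k)
include hlam

theorem norm_truncPow_le_nrmD {x : Hsp} (hx : memD lam σ x) :
    ‖truncPow lam σ F x‖ ≤ nrmD lam σ x := by
  refine le_sqrt_of_sq_le ?_
  rw [norm_truncPow_sq]
  simp only [← rpow_two_mul_mul_sq (hlam _)]
  exact hx.sum_le_tsum F fun k _ => mul_nonneg (rpow_nonneg (hlam k) _) (sq_nonneg _)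

theorem memD_and_nrmD_le_of_norm_truncPow_le {x : Hsp} {B : ℝ}
    (h : ∀ F, ‖truncPow lam σ F x‖ ≤ B) : memD lam σ x ∧ nrmD lam σ x ≤ B := by
  have hB : 0 ≤ B := (norm_nonneg _).trans (h ∅)
  have hsum : ∀ F : Finset ℕ, ∑ k ∈ F, lam k ^ (2 * σ) * x k ^ 2 ≤ B ^ 2 := fun F => by
    simp only [rpow_two_mul_mul_sq (hlam _), ← norm_truncPow_sq]
    exact pow_le_pow_left₀ (norm_nonneg _) (h F) 2
  have hnonneg : ∀ k, 0 ≤ lam k ^ (2 * σ) * x k ^ 2 :=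
    fun k => mul_nonneg (rpow_nonneg (hlam k) _) (sq_nonneg _)
  have hx : memD lam σ x := summable_of_sum_le hnonneg hsum
  exact ⟨hx, sqrt_le_iff.mpr ⟨hB, hx.tsum_le_of_sum_le hsum⟩⟩

end truncPow

section DiagonalSemigroup

variable {lam : ℕ → ℝ} {S : ℝ → Hsp → Hsp}
  (hS : ∀ t : ℝ, 0 ≤ t → ∀ (x : Hsp) (k : ℕ), S t x k = exp (-(lam k * t)) * x k)
include hS

theorem norm_truncPow_semigroup_le_norm_truncPow (hlam : ∀ k, 0 ≤ lam k) {σ t : ℝ}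
    (ht : 0 ≤ t) (x : Hsp) (F : Finset ℕ) :
    ‖truncPow lam σ F (S t x)‖ ≤ ‖truncPow lam σ F x‖ := by
  refine norm_truncPow_le_norm_truncPow fun k _ => ?_
  rw [hS t ht, abs_mul, abs_of_pos (exp_pos _)]
  exact mul_le_of_le_one_left (abs_nonneg _) (exp_le_one_iff.mpr (by nlinarith [hlam k]))

variable {lam₀ a : ℝ} (hlam₀ : 0 < lam₀) (hlam : ∀ k, lam₀ ≤ lam k) (ha0 : 0 ≤ a)
include hlam₀ hlam ha0

theorem norm_truncPow_semigroup_le (ha1 : a ≤ 1) {u : ℝ} (hu : 0 < u) (y : Hsp)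
    (F : Finset ℕ) :
    ‖truncPow lam a F (S u y)‖ ≤ 2 ^ a * u ^ (-a) * exp (-(lam₀ / 2 * u)) * ‖y‖ := by
  refine norm_truncPow_le_mul_norm (by positivity) fun k _ => ?_
  have hlk : 0 ≤ lam k := hlam₀.le.trans (hlam k)
  rw [hS u hu.le, ← mul_assoc, abs_mul, abs_of_nonneg (by positivity)]
  exact mul_le_mul_of_nonneg_right
    (rpow_mul_exp_neg_mul_le ha0 ha1 hlam₀.le (hlam k) hu) (abs_nonneg _)

theorem norm_truncPow_intervalIntegral_semigroup_le (ha1 : a < 1) {f : ℝ → Hsp} {M : ℝ}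
    (hf : ∀ s, 0 ≤ s → ‖f s‖ ≤ M) {t : ℝ} (ht : 0 ≤ t) (F : Finset ℕ) :
    ‖truncPow lam a F (∫ s in (0 : ℝ)..t, S (t - s) (f s))‖ ≤
      M * (2 ^ a * ((1 / (lam₀ / 2)) ^ (1 - a) * Gamma (1 - a))) := by
  have hM : 0 ≤ M := (norm_nonneg _).trans (hf 0 le_rfl)
  have hGamma : 0 < Gamma (1 - a) := Gamma_pos_of_pos (by linarith)
  by_cases hint : IntervalIntegrable (fun s => S (t - s) (f s)) volume 0 t
  swap
  · rw [intervalIntegral.integral_undef hint, map_zero, norm_zero]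
    positivity
  set g : ℝ → ℝ := fun u => u ^ (-a) * exp (-(lam₀ / 2 * u))
  have hg : IntervalIntegrable g volume 0 t :=
    (intervalIntegrable_iff_integrableOn_Ioc_of_le ht).mpr
      ((integrableOn_rpow_neg_mul_exp_neg_mul ha1 (by positivity)).mono_set Ioc_subset_Ioi_self)
  have hg_rev : IntervalIntegrable (fun s => g (t - s)) volume 0 t := by
    simpa using (hg.comp_sub_left t).symm
  calc ‖truncPow lam a F (∫ s in (0 : ℝ)..t, S (t - s) (f s))‖
      = ‖∫ s in (0 : ℝ)..t, truncPow lam a F (S (t - s) (f s))‖ := by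
        rw [(truncPow lam a F).intervalIntegral_comp_comm hint]
    _ ≤ ∫ s in (0 : ℝ)..t, M * 2 ^ a * g (t - s) := by
        refine intervalIntegral.norm_integral_le_of_norm_le ht ?_ (hg_rev.const_mul _)
        filter_upwards [(countable_singleton t).ae_notMem volume] with s hst hs
        have hu : 0 < t - s := sub_pos.mpr (lt_of_le_of_ne hs.2 hst)
        calc ‖truncPow lam a F (S (t - s) (f s))‖
            ≤ 2 ^ a * (t - s) ^ (-a) * exp (-(lam₀ / 2 * (t - s))) * ‖f s‖ :=
              norm_truncPow_semigroup_le hS hlam₀ hlam ha0 ha1.le hu (f s) F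
          _ ≤ 2 ^ a * (t - s) ^ (-a) * exp (-(lam₀ / 2 * (t - s))) * M := by
              gcongr
              exact hf s hs.1.le
          _ = M * 2 ^ a * g (t - s) := by ring
    _ = M * 2 ^ a * ∫ u in (0 : ℝ)..t, g u := by
        rw [intervalIntegral.integral_const_mul, intervalIntegral.integral_comp_sub_left]
        simp
    _ ≤ M * (2 ^ a * ((1 / (lam₀ / 2)) ^ (1 - a) * Gamma (1 - a))) := by
        rw [← mul_assoc]
        gcongr
        exact intervalIntegral_rpow_neg_mul_exp_neg_mul_le ha1 (by positivity) ht

end DiagonalSemigroup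

theorem stmt10_general
    (lam : ℕ → ℝ) (lam0 : ℝ) (hlam0 : 0 < lam0) (hlam : ∀ k, lam0 ≤ lam k)
    (S : ℝ → Hsp → Hsp)
    (hS : ∀ t : ℝ, 0 ≤ t → ∀ (x : Hsp) (k : ℕ), S t x k = Real.exp (-(lam k * t)) * x k)
    (M : ℝ)
    (a : ℝ) (ha : a ∈ Set.Ioo (0:ℝ) 1) :
    ∃ C > 0, ∀ f : ℝ → Hsp, ContinuousOn f (Set.Ici 0) → (∀ s : ℝ, 0 ≤ s → ‖f s‖ ≤ M) →
      ∀ x : Hsp, memD lam a x → ∀ X : ℝ → Hsp,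
      (∀ t : ℝ, 0 ≤ t → X t = S t x + ∫ s in (0:ℝ)..t, S (t - s) (f s)) →
      ∀ t : ℝ, 0 ≤ t →
        memD lam a (X t) ∧ nrmD lam a (X t) ≤ C * (1 + nrmD lam a x) := by
  set B := M * (2 ^ a * ((1 / (lam0 / 2)) ^ (1 - a) * Gamma (1 - a)))
  refine ⟨max 1 B, lt_max_of_lt_left one_pos, fun f _ hf x hx X hX t ht => ?_⟩
  have hlam_nonneg : ∀ k, 0 ≤ lam k := fun k => hlam0.le.trans (hlam k)
  have hXt : ∀ F, ‖truncPow lam a F (X t)‖ ≤ nrmD lam a x + B := fun F =>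
    calc ‖truncPow lam a F (X t)‖
        ≤ ‖truncPow lam a F (S t x)‖ + ‖truncPow lam a F (∫ s in (0:ℝ)..t, S (t - s) (f s))‖ := by
          rw [hX t ht, map_add]
          exact norm_add_le _ _
      _ ≤ nrmD lam a x + B := add_le_add
          ((norm_truncPow_semigroup_le_norm_truncPow hS hlam_nonneg ht x F).trans
            (norm_truncPow_le_nrmD hlam_nonneg hx))
          (norm_truncPow_intervalIntegral_semigroup_le hS hlam0 hlam ha.1.le ha.2 hf ht F)
  refine (memD_and_nrmD_le_of_norm_truncPow_le hlam_nonneg hXt).imp_right fun h => h.trans ?_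
  have hx0 : 0 ≤ nrmD lam a x := sqrt_nonneg _
  nlinarith [le_max_left 1 B, le_max_right 1 B]

/-- Deterministic content of the slow-component part of Proposition A.2: for
`X(t) = S(t)x + ∫₀ᵗ S(t−s) f(s) ds` with `‖f‖ ≤ M`, `a ∈ (0,1)` and `x ∈ D_a`, there is
a constant `C` (depending only on `a`, `λ₀`, `M`) with `X(t) ∈ D_a` and
`|X(t)|_a ≤ C (1 + |x|_a)` for all `t ≥ 0`. -/
theorem stmt10
    (lam : ℕ → ℝ) (lam0 : ℝ) (hlam0 : 0 < lam0) (hlam : ∀ k, lam0 ≤ lam k)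
    (S : ℝ → Hsp → Hsp)
    (hS : ∀ t : ℝ, 0 ≤ t → ∀ (x : Hsp) (k : ℕ), S t x k = Real.exp (-(lam k * t)) * x k)
    (M : ℝ) (hM : 0 ≤ M)
    (a : ℝ) (ha : a ∈ Set.Ioo (0:ℝ) 1) :
    ∃ C > 0, ∀ f : ℝ → Hsp, ContinuousOn f (Set.Ici 0) → (∀ s : ℝ, 0 ≤ s → ‖f s‖ ≤ M) →
      ∀ x : Hsp, memD lam a x → ∀ X : ℝ → Hsp,
      (∀ t : ℝ, 0 ≤ t → X t = S t x + ∫ s in (0:ℝ)..t, S (t - s) (f s)) →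
      ∀ t : ℝ, 0 ≤ t →
        memD lam a (X t) ∧ nrmD lam a (X t) ≤ C * (1 + nrmD lam a x) :=
  stmt10_general lam lam0 hlam0 hlam S hS M a ha
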